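/- Let p be an odd prime, let (a_m)_{m=0,…,p} be the complete set of p+1 MUBs of ℂ^p consisting of the p Fourier–Gauss bases (m = 0,…,p−1) and the standard basis (m = p), and let W = diag(α_p^{s²}). Suppose U is a unitary on EuclideanSpace ℂ (Fin p × Fin p) commuting with W ⊗ I and with I ⊗ W, and such that |⟨a_m^x ⊗ a_m^y, U^n (a_0^{x'} ⊗ a_n^{y'})⟩|² = 1/p² for all x, y, x', y' ∈ Fin p, all n ∈ {1,…,p−1}, and all m ∈ {0,…,p}. Then the p² bases { U^ν (a_μ^x ⊗ a_{μ+ν}^y) : x, y ∈ Fin p } for μ, ν ∈ ℤ/pℤ, together with the standard basis of EuclideanSpace ℂ (Fin p × Fin p), form a complete set of p²+1 pairwise mutually unbiased bases. -/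

import Mathlib

/-!
Write `D(a, b) = (W ⊗ I)^a (I ⊗ W)^b`. Its action on a product of Fourier–Gauss vectors shifts
the two quadratic labels by `a` and `b`, it preserves inner products and moduli of coordinates,
and it commutes with `U`. For two of the new bases with `ν < ν'`, stripping `U^ν` and a suitable
`D(a, b)` turns each overlap into the hypothesis with `n = ν' - ν` and `m = μ - μ'`; overlaps
with the standard basis become the hypothesis with `m = p`. For equal `ν` the overlap is a
product of two Fourier–Gauss overlaps, and these have modulus `p^{-1/2}` because the quadratic
Gauss sum `∑ₛ ψ(cs + ds²)` has modulus `√p` whenever `2d` is invertible.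
-/

/-- `α_p = exp(2πi/p)`, the `p`-th root of unity. -/
noncomputable def rootOfUnity (p : ℕ) : ℂ := Complex.exp (2 * Real.pi * Complex.I / p)

/-- The Fourier–Gauss vector `|j_m⟩` with components `p^{-1/2}·α_p^{js + ms²}`. -/
noncomputable def fourierGauss (p : ℕ) (j m : ℕ) : EuclideanSpace ℂ (Fin p) :=
  WithLp.toLp 2 (fun s : Fin p => (Real.sqrt p : ℂ)⁻¹ * rootOfUnity p ^ (j * (s : ℕ) + m * (s : ℕ) ^ 2))

/-- The complete set `(a_m)_{m=0,…,p}` of MUBs of `ℂ^p`: the `p` Fourier–Gauss bases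
(`m < p`) and the standard basis (`m = p`). -/
noncomputable def mubQupit (p : ℕ) (m : Fin (p + 1)) (x : Fin p) : EuclideanSpace ℂ (Fin p) :=
  if (m : ℕ) < p then fourierGauss p (x : ℕ) (m : ℕ) else EuclideanSpace.single x 1

/-- The product vector `(u ⊗ v)(a,b) = u(a)·v(b)`. -/
noncomputable def tens {p : ℕ} (u v : EuclideanSpace ℂ (Fin p)) :
    EuclideanSpace ℂ (Fin p × Fin p) :=
  WithLp.toLp 2 (fun ab : Fin p × Fin p => u ab.1 * v ab.2)

/-- The action of `W ⊗ I` on `ℂ^p ⊗ ℂ^p`, where `W = diag(α_p^{s²})`. -/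
noncomputable def WtensorI (p : ℕ) (ψ : EuclideanSpace ℂ (Fin p × Fin p)) :
    EuclideanSpace ℂ (Fin p × Fin p) :=
  WithLp.toLp 2 (fun st : Fin p × Fin p => rootOfUnity p ^ ((st.1 : ℕ) ^ 2) * ψ st)

/-- The action of `I ⊗ W` on `ℂ^p ⊗ ℂ^p`, where `W = diag(α_p^{s²})`. -/
noncomputable def ItensorW (p : ℕ) (ψ : EuclideanSpace ℂ (Fin p × Fin p)) :
    EuclideanSpace ℂ (Fin p × Fin p) :=
  WithLp.toLp 2 (fun st : Fin p × Fin p => rootOfUnity p ^ ((st.2 : ℕ) ^ 2) * ψ st)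

/-- The candidate basis vectors `U^ν (a_μ^x ⊗ a_{μ+ν}^y)`, with subscripts mod `p`. -/
noncomputable def genVec (p : ℕ)
    (U : EuclideanSpace ℂ (Fin p × Fin p) ≃ₗᵢ[ℂ] EuclideanSpace ℂ (Fin p × Fin p))
    (μ ν : ZMod p) (x y : Fin p) : EuclideanSpace ℂ (Fin p × Fin p) :=
  (U ^ ν.val) (tens (fourierGauss p (x : ℕ) μ.val) (fourierGauss p (y : ℕ) (μ.val + ν.val)))

open Finset ComplexConjugate
open scoped InnerProductSpace

theorem AddChar.norm_sq_sum_quadratic_eq_card {R : Type*} [CommRing R] [Fintype R]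
    [DecidableEq R] {ψ : AddChar R ℂ} (hψ : ψ.IsPrimitive) (c : R) {d : R}
    (hd : IsUnit (2 * d)) :
    ‖∑ s, ψ (c * s + d * s ^ 2)‖ ^ 2 = Fintype.card R := by
  -- substituting `s = t + u` factors the phase as `ψ(cu + du²) · ψ(t · 2du)`
  have hshift : ∀ t : R, ∑ s, conj (ψ (c * t + d * t ^ 2)) * ψ (c * s + d * s ^ 2)
      = ∑ u, ψ (c * u + d * u ^ 2) * ψ (t * (2 * d * u)) := by
    intro t
    rw [← Equiv.sum_comp (Equiv.addLeft t)]
    refine sum_congr rfl fun u _ => ?_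
    rw [← map_neg_eq_conj, ← map_add_eq_mul, ← map_add_eq_mul, Equiv.coe_addLeft]
    ring_nf
  have horth : ∀ u : R, ∑ t, ψ (c * u + d * u ^ 2) * ψ (t * (2 * d * u))
      = if u = 0 then (Fintype.card R : ℂ) else 0 := by
    intro u
    rw [← mul_sum, sum_mulShift _ hψ]
    by_cases hu : u = 0 <;> simp [hu, hd.mul_right_eq_zero]
  have hconj : conj (∑ s, ψ (c * s + d * s ^ 2)) * ∑ s, ψ (c * s + d * s ^ 2)
      = Fintype.card R := by
    rw [map_sum, sum_mul_sum]
    simp_rw [hshift]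
    rw [sum_comm]
    simp [horth]
  exact_mod_cast (Complex.conj_mul' _).symm.trans hconj

lemma ZMod.isUnit_two_of_odd {n : ℕ} (hn : Odd n) : IsUnit (2 : ZMod n) := by
  exact_mod_cast (ZMod.isUnit_iff_coprime 2 n).mpr (Nat.coprime_two_left.mpr hn)

lemma ZMod.sum_fin_natCast {n : ℕ} [NeZero n] {M : Type*} [AddCommMonoid M] (f : ZMod n → M) :
    ∑ i : Fin n, f (i : ℕ) = ∑ s, f s := by
  obtain ⟨k, rfl⟩ : ∃ k, n = k + 1 := Nat.exists_eq_succ_of_ne_zero (NeZero.ne n)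
  exact Fintype.sum_congr _ _ fun i => congrArg f (ZMod.natCast_zmod_val (n := k + 1) i)

lemma LinearIsometryEquiv.coe_pow {R E : Type*} [Semiring R] [SeminormedAddCommGroup E]
    [Module R E] (U : E ≃ₗᵢ[R] E) (n : ℕ) : ⇑(U ^ n) = (⇑U)^[n] :=
  hom_coe_pow _ rfl (fun _ _ => rfl) U n

lemma inner_iterate_apply_iterate_apply {E : Type*} [Inner ℂ E] {T : E → E}
    (hT : ∀ x y, ⟪T x, T y⟫_ℂ = ⟪x, y⟫_ℂ) (k : ℕ) (x y : E) :
    ⟪T^[k] x, T^[k] y⟫_ℂ = ⟪x, y⟫_ℂ := by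
  induction k generalizing x y with
  | zero => rfl
  | succ k ih => rw [Function.iterate_succ_apply, Function.iterate_succ_apply, ih, hT]

lemma norm_iterate_apply_apply {ι : Type*} {T : EuclideanSpace ℂ ι → EuclideanSpace ℂ ι}
    (hT : ∀ ψ i, ‖T ψ i‖ = ‖ψ i‖) (k : ℕ) (ψ : EuclideanSpace ℂ ι) (i : ι) :
    ‖T^[k] ψ i‖ = ‖ψ i‖ := by
  induction k with
  | zero => rfl
  | succ k ih => rw [Function.iterate_succ_apply', hT, ih]

lemma inner_toLp_mul_toLp_mul {ι : Type*} [Fintype ι] {f : ι → ℂ} (hf : ∀ i, ‖f i‖ = 1)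
    (φ χ : EuclideanSpace ℂ ι) :
    ⟪(WithLp.toLp 2 fun i => f i * φ i : EuclideanSpace ℂ ι),
      WithLp.toLp 2 fun i => f i * χ i⟫_ℂ = ⟪φ, χ⟫_ℂ := by
  simp only [PiLp.inner_apply, RCLike.inner_apply, map_mul]
  refine Fintype.sum_congr _ _ fun i => ?_
  have hunit := Complex.conj_mul' (f i)
  rw [hf, Complex.ofReal_one, one_pow] at hunit
  linear_combination (conj (φ i) * χ i) * hunit

section Tensor

variable {p : ℕ}

lemma tens_apply (u v : EuclideanSpace ℂ (Fin p)) (st : Fin p × Fin p) :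
    tens u v st = u st.1 * v st.2 := rfl

lemma inner_tens (u v u' v' : EuclideanSpace ℂ (Fin p)) :
    ⟪tens u v, tens u' v'⟫_ℂ = ⟪u, u'⟫_ℂ * ⟪v, v'⟫_ℂ := by
  simp only [PiLp.inner_apply, sum_mul_sum, ← Fintype.sum_prod_type', tens, RCLike.inner_apply,
    map_mul]
  exact Fintype.sum_congr _ _ fun _ => by ring

lemma tens_single_single (a b : Fin p) :
    tens (EuclideanSpace.single a (1 : ℂ)) (EuclideanSpace.single b 1)
      = EuclideanSpace.single (a, b) 1 := by
  ext st
  simp only [tens_apply, PiLp.single_apply, Prod.ext_iff]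
  split_ifs <;> simp_all

end Tensor

section GaussVec

variable {p : ℕ} [NeZero p]

lemma rootOfUnity_pow (n : ℕ) : rootOfUnity p ^ n = ZMod.stdAddChar (n : ZMod p) := by
  rw [ZMod.stdAddChar_apply, ZMod.toCircle_natCast, rootOfUnity, ← Complex.exp_nat_mul]
  ring_nf

lemma norm_rootOfUnity_pow (n : ℕ) : ‖rootOfUnity p ^ n‖ = 1 := by
  rw [rootOfUnity_pow, AddChar.norm_apply]

variable (p) in
noncomputable def gaussVec (c d : ZMod p) : EuclideanSpace ℂ (Fin p) :=
  WithLp.toLp 2 fun s =>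
    (√p : ℂ)⁻¹ * ZMod.stdAddChar (c * ((s : ℕ) : ZMod p) + d * ((s : ℕ) : ZMod p) ^ 2)

lemma fourierGauss_eq_gaussVec (j m : ℕ) : fourierGauss p j m = gaussVec p j m := by
  ext s
  simp only [fourierGauss, gaussVec, rootOfUnity_pow]
  push_cast
  rfl

lemma norm_gaussVec_apply (c d : ZMod p) (s : Fin p) : ‖gaussVec p c d s‖ = (√p)⁻¹ := by
  simp [gaussVec, AddChar.norm_apply]

lemma norm_sq_tens_gaussVec_apply (c d c' d' : ZMod p) (st : Fin p × Fin p) :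
    ‖tens (gaussVec p c d) (gaussVec p c' d') st‖ ^ 2 = 1 / p ^ 2 := by
  rw [tens_apply, norm_mul, norm_gaussVec_apply, norm_gaussVec_apply, ← mul_inv,
    Real.mul_self_sqrt (Nat.cast_nonneg p), one_div, inv_pow]

lemma inner_gaussVec (c d c' d' : ZMod p) :
    ⟪gaussVec p c d, gaussVec p c' d'⟫_ℂ
      = (p : ℂ)⁻¹ * ∑ s, ZMod.stdAddChar ((c' - c) * s + (d' - d) * s ^ 2) := by
  rw [PiLp.inner_apply, ← ZMod.sum_fin_natCast, mul_sum]
  refine sum_congr rfl fun s _ => ?_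
  have hsqrt : (√p : ℂ)⁻¹ * (√p : ℂ)⁻¹ = (p : ℂ)⁻¹ := by
    rw [← mul_inv, ← Complex.ofReal_mul, Real.mul_self_sqrt (Nat.cast_nonneg p)]
    push_cast
    rfl
  simp only [gaussVec, RCLike.inner_apply, map_mul, map_inv₀, Complex.conj_ofReal,
    ← AddChar.map_neg_eq_conj]
  rw [mul_mul_mul_comm, hsqrt, ← AddChar.map_add_eq_mul]
  ring_nf

lemma norm_sq_inner_gaussVec [Fact p.Prime] (hodd : Odd p) (c c' : ZMod p) {d d' : ZMod p}
    (hd : d ≠ d') : ‖⟪gaussVec p c d, gaussVec p c' d'⟫_ℂ‖ ^ 2 = 1 / p := by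
  have hunit : IsUnit (2 * (d' - d)) :=
    (ZMod.isUnit_two_of_odd hodd).mul (sub_ne_zero.mpr hd.symm).isUnit
  rw [inner_gaussVec, norm_mul, mul_pow,
    AddChar.norm_sq_sum_quadratic_eq_card (ZMod.isPrimitive_stdAddChar p) _ hunit, ZMod.card,
    norm_inv, Complex.norm_natCast]
  have : (p : ℝ) ≠ 0 := NeZero.ne _
  field_simp

lemma inner_WtensorI (φ χ : EuclideanSpace ℂ (Fin p × Fin p)) :
    ⟪WtensorI p φ, WtensorI p χ⟫_ℂ = ⟪φ, χ⟫_ℂ :=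
  inner_toLp_mul_toLp_mul (fun _ => norm_rootOfUnity_pow _) φ χ

lemma inner_ItensorW (φ χ : EuclideanSpace ℂ (Fin p × Fin p)) :
    ⟪ItensorW p φ, ItensorW p χ⟫_ℂ = ⟪φ, χ⟫_ℂ :=
  inner_toLp_mul_toLp_mul (fun _ => norm_rootOfUnity_pow _) φ χ

lemma norm_WtensorI_apply (ψ : EuclideanSpace ℂ (Fin p × Fin p)) (st : Fin p × Fin p) :
    ‖WtensorI p ψ st‖ = ‖ψ st‖ := by
  rw [WtensorI, PiLp.toLp_apply, norm_mul, norm_rootOfUnity_pow, one_mul]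

lemma norm_ItensorW_apply (ψ : EuclideanSpace ℂ (Fin p × Fin p)) (st : Fin p × Fin p) :
    ‖ItensorW p ψ st‖ = ‖ψ st‖ := by
  rw [ItensorW, PiLp.toLp_apply, norm_mul, norm_rootOfUnity_pow, one_mul]

lemma WtensorI_tens_gaussVec (c d : ZMod p) (v : EuclideanSpace ℂ (Fin p)) :
    WtensorI p (tens (gaussVec p c d) v) = tens (gaussVec p c (d + 1)) v := by
  ext st
  simp only [WtensorI, tens, gaussVec, PiLp.toLp_apply, rootOfUnity_pow, Nat.cast_pow,
    add_one_mul, ← add_assoc, AddChar.map_add_eq_mul]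
  ring

lemma ItensorW_tens_gaussVec (u : EuclideanSpace ℂ (Fin p)) (c d : ZMod p) :
    ItensorW p (tens u (gaussVec p c d)) = tens u (gaussVec p c (d + 1)) := by
  ext st
  simp only [ItensorW, tens, gaussVec, PiLp.toLp_apply, rootOfUnity_pow, Nat.cast_pow,
    add_one_mul, ← add_assoc, AddChar.map_add_eq_mul]
  ring

lemma iterate_WtensorI_tens_gaussVec (k : ℕ) (c d : ZMod p) (v : EuclideanSpace ℂ (Fin p)) :
    (WtensorI p)^[k] (tens (gaussVec p c d) v) = tens (gaussVec p c (d + k)) v := by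
  induction k with
  | zero => simp
  | succ k ih => rw [Function.iterate_succ_apply', ih, WtensorI_tens_gaussVec, Nat.cast_succ,
      add_assoc]

lemma iterate_ItensorW_tens_gaussVec (k : ℕ) (u : EuclideanSpace ℂ (Fin p)) (c d : ZMod p) :
    (ItensorW p)^[k] (tens u (gaussVec p c d)) = tens u (gaussVec p c (d + k)) := by
  induction k with
  | zero => simp
  | succ k ih => rw [Function.iterate_succ_apply', ih, ItensorW_tens_gaussVec, Nat.cast_succ,
      add_assoc]

end GaussVec

section DiagPhase

variable {p : ℕ}

variable (p) in
noncomputable def diagPhase (a b : ℕ) (ψ : EuclideanSpace ℂ (Fin p × Fin p)) :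
    EuclideanSpace ℂ (Fin p × Fin p) :=
  (WtensorI p)^[a] ((ItensorW p)^[b] ψ)

lemma commute_pow_diagPhase
    {U : EuclideanSpace ℂ (Fin p × Fin p) ≃ₗᵢ[ℂ] EuclideanSpace ℂ (Fin p × Fin p)}
    (hW : Function.Commute U (WtensorI p)) (hI : Function.Commute U (ItensorW p)) (n a b : ℕ) :
    Function.Commute ⇑(U ^ n) (diagPhase p a b) := by
  rw [LinearIsometryEquiv.coe_pow]
  exact (hW.iterate_iterate n a).comp_right (hI.iterate_iterate n b)

variable [NeZero p]

lemma inner_diagPhase (a b : ℕ) (φ χ : EuclideanSpace ℂ (Fin p × Fin p)) :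
    ⟪diagPhase p a b φ, diagPhase p a b χ⟫_ℂ = ⟪φ, χ⟫_ℂ := by
  rw [diagPhase, diagPhase, inner_iterate_apply_iterate_apply inner_WtensorI,
    inner_iterate_apply_iterate_apply inner_ItensorW]

lemma norm_diagPhase_apply (a b : ℕ) (ψ : EuclideanSpace ℂ (Fin p × Fin p))
    (st : Fin p × Fin p) : ‖diagPhase p a b ψ st‖ = ‖ψ st‖ := by
  rw [diagPhase, norm_iterate_apply_apply norm_WtensorI_apply,
    norm_iterate_apply_apply norm_ItensorW_apply]

lemma diagPhase_tens_gaussVec (a b : ℕ) (c d c' d' : ZMod p) :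
    diagPhase p a b (tens (gaussVec p c d) (gaussVec p c' d'))
      = tens (gaussVec p c (d + a)) (gaussVec p c' (d' + b)) := by
  rw [diagPhase, iterate_ItensorW_tens_gaussVec, iterate_WtensorI_tens_gaussVec]

end DiagPhase

section GenVec

variable {p : ℕ} [NeZero p]
  (U : EuclideanSpace ℂ (Fin p × Fin p) ≃ₗᵢ[ℂ] EuclideanSpace ℂ (Fin p × Fin p))

lemma genVec_eq (μ ν : ZMod p) (x y : Fin p) :
    genVec p U μ ν x y = (U ^ ν.val) (tens (gaussVec p x μ) (gaussVec p y (μ + ν))) := by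
  rw [genVec, fourierGauss_eq_gaussVec, fourierGauss_eq_gaussVec, Nat.cast_add,
    ZMod.natCast_zmod_val, ZMod.natCast_zmod_val]

lemma inner_genVec_of_val_lt (hW : Function.Commute U (WtensorI p))
    (hI : Function.Commute U (ItensorW p)) {μ ν μ' ν' : ZMod p} (h : ν.val < ν'.val)
    (x y x' y' : Fin p) :
    ⟪genVec p U μ ν x y, genVec p U μ' ν' x' y'⟫_ℂ
      = ⟪tens (gaussVec p x (μ - μ')) (gaussVec p y (μ - μ')),
          (U ^ (ν'.val - ν.val))
            (tens (gaussVec p x' 0) (gaussVec p y' (ν'.val - ν.val : ℕ)))⟫_ℂ := by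
  set n := ν'.val - ν.val
  have hleft : tens (gaussVec p x μ) (gaussVec p y (μ + ν))
      = diagPhase p μ'.val (μ' + ν).val
          (tens (gaussVec p x (μ - μ')) (gaussVec p y (μ - μ'))) := by
    rw [diagPhase_tens_gaussVec, ZMod.natCast_zmod_val, ZMod.natCast_zmod_val]
    ring_nf
  have hright : tens (gaussVec p x' μ') (gaussVec p y' (μ' + ν'))
      = diagPhase p μ'.val (μ' + ν).val (tens (gaussVec p x' 0) (gaussVec p y' n)) := by
    rw [diagPhase_tens_gaussVec, ZMod.natCast_zmod_val, ZMod.natCast_zmod_val, Nat.cast_sub h.le,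
      ZMod.natCast_zmod_val, ZMod.natCast_zmod_val]
    ring_nf
  have hpow : ∀ χ, (U ^ ν'.val) χ = (U ^ ν.val) ((U ^ n) χ) := fun χ => by
    rw [LinearIsometryEquiv.coe_pow, LinearIsometryEquiv.coe_pow, LinearIsometryEquiv.coe_pow,
      ← Function.iterate_add_apply, show ν.val + n = ν'.val by omega]
  rw [genVec_eq, genVec_eq, hleft, hright, hpow, LinearIsometryEquiv.inner_map_map,
    commute_pow_diagPhase hW hI, inner_diagPhase]

lemma norm_sq_inner_genVec_of_ne [Fact p.Prime] (hodd : Odd p) {μ μ' : ZMod p} (h : μ ≠ μ')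
    (ν : ZMod p) (x y x' y' : Fin p) :
    ‖⟪genVec p U μ ν x y, genVec p U μ' ν x' y'⟫_ℂ‖ ^ 2 = 1 / p ^ 2 := by
  rw [genVec_eq, genVec_eq, LinearIsometryEquiv.inner_map_map, inner_tens, norm_mul, mul_pow,
    norm_sq_inner_gaussVec hodd _ _ h,
    norm_sq_inner_gaussVec hodd _ _ ((add_left_injective ν).ne h)]
  ring

lemma norm_genVec_apply (hW : Function.Commute U (WtensorI p))
    (hI : Function.Commute U (ItensorW p)) (μ ν : ZMod p) (x y : Fin p)
    (st : Fin p × Fin p) :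
    ‖genVec p U μ ν x y st‖ = ‖(U ^ ν.val) (tens (gaussVec p x 0) (gaussVec p y ν)) st‖ := by
  have hphase : tens (gaussVec p x μ) (gaussVec p y (μ + ν))
      = diagPhase p μ.val μ.val (tens (gaussVec p x 0) (gaussVec p y ν)) := by
    rw [diagPhase_tens_gaussVec, ZMod.natCast_zmod_val]
    ring_nf
  rw [genVec_eq, hphase, commute_pow_diagPhase hW hI, norm_diagPhase_apply]

end GenVec

/-- If a unitary `U` on `ℂ^p ⊗ ℂ^p` commutes with `W ⊗ I` and `I ⊗ W` and satisfies
`|⟨a_m^x ⊗ a_m^y, U^n (a_0^{x'} ⊗ a_n^{y'})⟩|² = 1/p²` for all `1 ≤ n ≤ p−1` and all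
`m = 0,…,p`, then the `p²` bases `{U^ν (a_μ^x ⊗ a_{μ+ν}^y)}` together with the standard
basis form a complete set of `p²+1` pairwise mutually unbiased bases. -/
theorem genVec_complete_mub (p : ℕ) (hp : p.Prime) (hodd : Odd p)
    (U : EuclideanSpace ℂ (Fin p × Fin p) ≃ₗᵢ[ℂ] EuclideanSpace ℂ (Fin p × Fin p))
    (hUW : ∀ ψ, U (WtensorI p ψ) = WtensorI p (U ψ))
    (hUW' : ∀ ψ, U (ItensorW p ψ) = ItensorW p (U ψ))
    (hmub : ∀ n : ℕ, 1 ≤ n → n ≤ p - 1 →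
      ∀ (m : Fin (p + 1)) (x y x' y' : Fin p),
        ‖(inner ℂ (tens (mubQupit p m x) (mubQupit p m y))
            ((U ^ n) (tens (fourierGauss p (x' : ℕ) 0) (fourierGauss p (y' : ℕ) n))) : ℂ)‖ ^ 2
          = 1 / ((p : ℝ) ^ 2)) :
    (∀ μ ν μ' ν' : ZMod p, (μ, ν) ≠ (μ', ν') →
      ∀ x y x' y' : Fin p,
        ‖(inner ℂ (genVec p U μ ν x y) (genVec p U μ' ν' x' y') : ℂ)‖ ^ 2
          = 1 / ((p : ℝ) ^ 2)) ∧
    (∀ (μ ν : ZMod p) (x y : Fin p) (st : Fin p × Fin p),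
      ‖(inner ℂ (EuclideanSpace.single st (1 : ℂ)) (genVec p U μ ν x y) : ℂ)‖ ^ 2
        = 1 / ((p : ℝ) ^ 2)) := by
  have : Fact p.Prime := ⟨hp⟩
  have hgauss : ∀ n, 1 ≤ n → n ≤ p - 1 → ∀ (m : ZMod p) (x y x' y' : Fin p),
      ‖⟪tens (gaussVec p x m) (gaussVec p y m),
        (U ^ n) (tens (gaussVec p x' 0) (gaussVec p y' n))⟫_ℂ‖ ^ 2 = 1 / p ^ 2 := by
    intro n h1 h2 m x y x' y'
    simpa [mubQupit, m.val_lt, fourierGauss_eq_gaussVec, ZMod.natCast_zmod_val] using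
      hmub n h1 h2 (Fin.castSucc ⟨m.val, m.val_lt⟩) x y x' y'
  have hstd : ∀ n, 1 ≤ n → n ≤ p - 1 → ∀ (x' y' : Fin p) (st : Fin p × Fin p),
      ‖(U ^ n) (tens (gaussVec p x' 0) (gaussVec p y' n)) st‖ ^ 2 = 1 / p ^ 2 := by
    intro n h1 h2 x' y' st
    simpa [mubQupit, fourierGauss_eq_gaussVec, tens_single_single,
      EuclideanSpace.inner_single_left] using hmub n h1 h2 (Fin.last p) st.1 st.2 x' y'
  refine ⟨fun μ ν μ' ν' hne x y x' y' => ?_, fun μ ν x y st => ?_⟩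
  · rcases lt_trichotomy ν.val ν'.val with h | h | h
    · rw [inner_genVec_of_val_lt U hUW hUW' h]
      exact hgauss _ (by omega) (by have := ν'.val_lt; omega) _ _ _ _ _
    · obtain rfl := ZMod.val_injective p h
      exact norm_sq_inner_genVec_of_ne U hodd (fun h => hne (by rw [h])) ν x y x' y'
    · rw [← inner_conj_symm, Complex.norm_conj, inner_genVec_of_val_lt U hUW hUW' h]
      exact hgauss _ (by omega) (by have := ν.val_lt; omega) _ _ _ _ _
  · rw [EuclideanSpace.inner_single_left, map_one, one_mul, norm_genVec_apply U hUW hUW']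
    rcases eq_or_ne ν 0 with rfl | hν
    · simpa using norm_sq_tens_gaussVec_apply _ _ _ _ st
    · have := hstd ν.val (ZMod.val_pos.mpr hν) (by have := ν.val_lt; omega) x y st
      rwa [ZMod.natCast_zmod_val] at this
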